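/- arXiv:2410.23847 — 7 statements merged into one kernel-verified Lean document; each statement's English description precedes it below -/
import Mathlib

section
/- Let γ be a finset of X and define the falling factorial pairing ⟨(γ)_n, f⟩ := ∑ over ordered n-tuples of pairwise distinct points of γ of f. Then the lowering property holds: for each x ∈ X with x ∉ γ, ⟨(γ ∪ {x})_n, f⟩ - ⟨(γ)_n, f⟩ = n · ⟨(γ)_{n-1}, f(x, ·)⟩ whenever f : X^n → ℝ is symmetric and n ≥ 1. -/
/-- `⟨(γ)_n, g⟩`: the sum of `g` over all ordered `n`-tuples of pairwise distinct
elements of the finset `γ`. -/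
noncomputable def ffPairing {X : Type*} [DecidableEq X] (γ : Finset X) (n : ℕ)
    (g : (Fin n → X) → ℝ) : ℝ :=
  ∑ t ∈ (Fintype.piFinset fun _ : Fin n => γ).filter (fun t => Function.Injective t), g t

/-- A function of `n` variables is symmetric if it is invariant under permutations
of its arguments. -/
def IsSymmFun {X : Type*} {n : ℕ} (f : (Fin n → X) → ℝ) : Prop :=
  ∀ (σ : Equiv.Perm (Fin n)) (t : Fin n → X), f (t ∘ σ) = f t

theorem lowering_property {X : Type*} [DecidableEq X] (γ : Finset X) (x : X)
    (hx : x ∉ γ) (n : ℕ) (f : (Fin (n + 1) → X) → ℝ) (hf : IsSymmFun f) :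
    ffPairing (insert x γ) (n + 1) f - ffPairing γ (n + 1) f
      = (n + 1 : ℝ) * ffPairing γ n (fun t => f (Fin.cons x t)) := by
  classical
  set σfun : Fin (n + 1) → Equiv.Perm (Fin (n + 1)) :=
    fun i => (finSuccEquiv' i).trans (finSuccEquiv n).symm with hσ
  have hins : ∀ (i : Fin (n + 1)) (s : Fin n → X),
      Fin.insertNth i x s = Fin.cons x s ∘ (σfun i) := by
    intro i s
    funext j
    refine Fin.succAboveCases i ?_ ?_ j
    · simp [σfun]
    · intro k
      simp [σfun, finSuccEquiv'_succAbove]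
  have hfins : ∀ (i : Fin (n + 1)) (s : Fin n → X),
      f (Fin.insertNth i x s) = f (Fin.cons x s) := by
    intro i s; rw [hins]; exact hf _ _
  set A := (Fintype.piFinset fun _ : Fin (n + 1) => insert x γ).filter
    (fun t => Function.Injective t) with hA
  set B := (Fintype.piFinset fun _ : Fin (n + 1) => γ).filter
    (fun t => Function.Injective t) with hB
  set C := (Fintype.piFinset fun _ : Fin n => γ).filter
    (fun t => Function.Injective t) with hC
  have hBA : B ⊆ A := by
    intro t ht
    simp only [hA, hB, Finset.mem_filter, Fintype.mem_piFinset] at *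
    exact ⟨fun i => Finset.mem_insert_of_mem (ht.1 i), ht.2⟩
  -- existence of a coordinate equal to x for elements of A \ B
  have hex : ∀ t ∈ A \ B, ∃ i, t i = x := by
    intro t ht
    rw [Finset.mem_sdiff] at ht
    obtain ⟨htA, htB⟩ := ht
    simp only [hA, hB, Finset.mem_filter, Fintype.mem_piFinset] at htA htB
    by_contra h
    push_neg at h
    exact htB ⟨fun i => by
      rcases Finset.mem_insert.mp (htA.1 i) with h' | h'
      · exact absurd h' (h i)
      · exact h', htA.2⟩
  have hj' : ∀ p ∈ Finset.univ ×ˢ C, Fin.insertNth (Prod.fst p) x p.2 ∈ A \ B := by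
    intro p hp
    simp only [Finset.mem_product, Finset.mem_univ, true_and, hC,
      Finset.mem_filter, Fintype.mem_piFinset] at hp
    have hinj : Function.Injective (Fin.insertNth p.1 x p.2) := by
      rw [hins]
      refine (Fin.cons_injective_iff.mpr ⟨?_, hp.2⟩).comp (σfun p.1).injective
      rintro ⟨k, hk⟩
      exact hx (hk ▸ hp.1 k)
    rw [Finset.mem_sdiff]
    constructor
    · simp only [hA, Finset.mem_filter, Fintype.mem_piFinset]
      refine ⟨fun j => ?_, hinj⟩
      refine Fin.succAboveCases p.1 ?_ ?_ j
      · simp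
      · intro k
        simp [Finset.mem_insert_of_mem (hp.1 k)]
    · simp only [hB, Finset.mem_filter, Fintype.mem_piFinset]
      intro hmem
      exact hx (by simpa using hmem.1 p.1)
  have key : ∑ t ∈ A \ B, f t
      = ∑ p ∈ Finset.univ ×ˢ C, f (Fin.insertNth p.1 x p.2) := by
    refine Finset.sum_bij'
      (i := fun t ht => ((Classical.choose (hex t ht) : Fin (n + 1)),
        t ∘ (Classical.choose (hex t ht)).succAbove))
      (j := fun p _ => Fin.insertNth p.1 x p.2) ?_ ?_ ?_ ?_ ?_
    · -- maps into product
      intro t ht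
      have hspec := Classical.choose_spec (hex t ht)
      set i := Classical.choose (hex t ht)
      rw [Finset.mem_sdiff] at ht
      obtain ⟨htA, _⟩ := ht
      simp only [hA, Finset.mem_filter, Fintype.mem_piFinset] at htA
      simp only [Finset.mem_product, Finset.mem_univ, true_and, hC,
        Finset.mem_filter, Fintype.mem_piFinset]
      refine ⟨fun k => ?_, htA.2.comp (Fin.succAbove_right_injective)⟩
      rcases Finset.mem_insert.mp (htA.1 (i.succAbove k)) with h' | h'
      · exact absurd (htA.2 (h'.trans hspec.symm)) (Fin.succAbove_ne i k)
      · exact h'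
    · -- maps back into A \ B
      exact hj'
    · -- left inverse
      intro t ht
      have hspec := Classical.choose_spec (hex t ht)
      set i := Classical.choose (hex t ht) with hi
      have h1 : i.insertNth (t i) (t ∘ i.succAbove) = t := Fin.insertNth_self_removeNth i t
      rw [hspec] at h1
      show i.insertNth x (t ∘ i.succAbove) = t
      exact h1
    · -- right inverse
      intro p hp
      have key4 : ∀ (hmem : Fin.insertNth p.1 x p.2 ∈ A \ B),
          ((Classical.choose (hex _ hmem) : Fin (n + 1)),
            Fin.insertNth p.1 x p.2 ∘ (Classical.choose (hex _ hmem)).succAbove) = p := by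
        intro hmem
        simp only [Finset.mem_product, Finset.mem_univ, true_and, hC,
          Finset.mem_filter, Fintype.mem_piFinset] at hp
        have hspec := Classical.choose_spec (hex (Fin.insertNth p.1 x p.2) hmem)
        set i' := Classical.choose (hex (Fin.insertNth p.1 x p.2) hmem) with hi'
        have hieq : i' = p.1 := by
          by_contra hne
          obtain ⟨k, hk⟩ := Fin.exists_succAbove_eq hne
          rw [← hk, Fin.insertNth_apply_succAbove] at hspec
          exact hx (hspec ▸ hp.1 k)
        rw [hieq]
        refine Prod.ext rfl ?_
        funext k
        simp [Fin.insertNth_apply_succAbove]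
      exact key4 (hj' p hp)
    · intro t ht
      have hspec := Classical.choose_spec (hex t ht)
      set i := Classical.choose (hex t ht) with hi
      have h1 : i.insertNth (t i) (t ∘ i.succAbove) = t := Fin.insertNth_self_removeNth i t
      rw [hspec] at h1
      show f t = f (i.insertNth x (t ∘ i.succAbove))
      rw [h1]
  have hsplit : (∑ t ∈ A, f t) - ∑ t ∈ B, f t = ∑ t ∈ A \ B, f t := by
    rw [← Finset.sum_sdiff hBA]; ring
  have hprod : ∑ p ∈ Finset.univ ×ˢ C, f (Fin.insertNth p.1 x p.2)
      = (n + 1 : ℝ) * ∑ s ∈ C, f (Fin.cons x s) := by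
    rw [Finset.sum_product]
    simp only [hfins]
    rw [Finset.sum_const, Finset.card_univ, Fintype.card_fin, nsmul_eq_mul]
    push_cast
    ring
  show (∑ t ∈ A, f t) - ∑ t ∈ B, f t = (n + 1 : ℝ) * ∑ s ∈ C, f (Fin.cons x s)
  rw [hsplit, key, hprod]
end

section
/- Let γ be a finset of X, x ∈ γ, and f : X^n → ℝ symmetric, n ≥ 1. Then the death-difference formula holds: ⟨(γ ∖ {x})_n, f⟩ - ⟨(γ)_n, f⟩ = -n · ⟨(γ ∖ {x})_{n-1}, f(x, ·)⟩. -/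
open Finset Function

theorem Fin.insertNth_injective_iff {α : Type*} {n : ℕ} {p : Fin (n + 1)} {a : α}
    {s : Fin n → α} : Injective (p.insertNth a s) ↔ a ∉ Set.range s ∧ Injective s := by
  rw [← Fin.cons_comp_cycleRange, Equiv.injective_comp, Fin.cons_injective_iff]

theorem IsSymmFun.apply_insertNth {X : Type*} {n : ℕ} {f : (Fin (n + 1) → X) → ℝ}
    (hf : IsSymmFun f) (p : Fin (n + 1)) (a : X) (s : Fin n → X) :
    f (p.insertNth a s) = f (Fin.cons a s) := by
  rw [← Fin.cons_comp_cycleRange, hf]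

section InjTuples

variable {X : Type*} [DecidableEq X]

def injTuples (γ : Finset X) (n : ℕ) : Finset (Fin n → X) :=
  (Fintype.piFinset fun _ : Fin n => γ).filter Injective

@[simp]
theorem mem_injTuples {γ : Finset X} {n : ℕ} {t : Fin n → X} :
    t ∈ injTuples γ n ↔ (∀ i, t i ∈ γ) ∧ Injective t := by
  simp [injTuples]

theorem ffPairing_eq_sum_injTuples (γ : Finset X) (n : ℕ) (g : (Fin n → X) → ℝ) :
    ffPairing γ n g = ∑ t ∈ injTuples γ n, g t :=
  rfl

theorem filter_injTuples_forall_ne (γ : Finset X) (n : ℕ) (x : X) :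
    (injTuples γ n).filter (fun t => ∀ i, t i ≠ x) = injTuples (γ.erase x) n := by
  ext t
  simp only [mem_filter, mem_injTuples, mem_erase, forall_and]
  tauto

theorem sum_filter_injTuples_apply_eq {M : Type*} [AddCommMonoid M] {γ : Finset X} {x : X}
    (hx : x ∈ γ) {n : ℕ} (p : Fin (n + 1)) (g : (Fin (n + 1) → X) → M) :
    ∑ t ∈ (injTuples γ (n + 1)).filter (fun t => t p = x), g t
      = ∑ s ∈ injTuples (γ.erase x) n, g (p.insertNth x s) := by
  have insertNth_removeNth : ∀ t ∈ (injTuples γ (n + 1)).filter (fun t => t p = x),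
      p.insertNth x (p.removeNth t) = t := fun t ht => by
    rw [← (mem_filter.1 ht).2, Fin.insertNth_self_removeNth]
  refine sum_nbij' (fun t => p.removeNth t) (fun s => p.insertNth x s) ?_ ?_ insertNth_removeNth
    (fun s _ => Fin.removeNth_insertNth (α := fun _ => X) p x s)
    (fun t ht => by rw [insertNth_removeNth t ht])
  · intro t ht
    simp only [mem_filter, mem_injTuples] at ht
    obtain ⟨⟨hγ, hinj⟩, rfl⟩ := ht
    simp only [mem_injTuples, mem_erase]
    exact ⟨fun k => ⟨hinj.ne (Fin.succAbove_ne p k), hγ _⟩,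
      hinj.comp Fin.succAbove_right_injective⟩
  · intro s hs
    simp only [mem_injTuples, mem_erase] at hs
    simp only [mem_filter, mem_injTuples, Fin.insertNth_apply_same, and_true,
      Fin.forall_iff_succAbove p, Fin.insertNth_apply_succAbove, Fin.insertNth_injective_iff]
    exact ⟨⟨hx, fun k => (hs.1 k).2⟩, by rintro ⟨k, hk⟩; exact (hs.1 k).1 hk, hs.2⟩

theorem filter_injTuples_not_forall_ne (γ : Finset X) (n : ℕ) (x : X) :
    (injTuples γ n).filter (fun t => ¬∀ i, t i ≠ x)
      = univ.biUnion fun p => (injTuples γ n).filter (fun t => t p = x) := by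
  ext t
  simp

theorem pairwiseDisjoint_filter_injTuples_apply_eq (γ : Finset X) (n : ℕ) (x : X) :
    ((univ : Finset (Fin n)) : Set (Fin n)).PairwiseDisjoint
      fun p => (injTuples γ n).filter (fun t => t p = x) := by
  intro p _ q _ hpq
  refine disjoint_filter.2 fun t ht htp htq => hpq ?_
  exact (mem_injTuples.1 ht).2 (htp.trans htq.symm)

theorem ffPairing_succ_eq_erase_add_sum_insertNth {γ : Finset X} {x : X} (hx : x ∈ γ) (n : ℕ)
    (g : (Fin (n + 1) → X) → ℝ) :
    ffPairing γ (n + 1) g = ffPairing (γ.erase x) (n + 1) g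
      + ∑ p : Fin (n + 1), ffPairing (γ.erase x) n (fun s => g (p.insertNth x s)) := by
  simp only [ffPairing_eq_sum_injTuples, ← sum_filter_injTuples_apply_eq hx]
  rw [← filter_injTuples_forall_ne,
    ← sum_biUnion (pairwiseDisjoint_filter_injTuples_apply_eq γ (n + 1) x),
    ← filter_injTuples_not_forall_ne, sum_filter_add_sum_filter_not]

end InjTuples

theorem death_difference {X : Type*} [DecidableEq X] (γ : Finset X) (x : X)
    (hx : x ∈ γ) (n : ℕ) (f : (Fin (n + 1) → X) → ℝ) (hf : IsSymmFun f) :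
    ffPairing (γ.erase x) (n + 1) f - ffPairing γ (n + 1) f
      = -(n + 1 : ℝ) * ffPairing (γ.erase x) n (fun t => f (Fin.cons x t)) := by
  simp only [ffPairing_succ_eq_erase_add_sum_insertNth hx, hf.apply_insertNth, sum_const,
    card_univ, Fintype.card_fin, nsmul_eq_mul]
  push_cast
  ring
end

section
/- Let γ be a finset of X, f : X^n → ℝ symmetric, and F(γ) := ⟨(γ)_n, f⟩ the falling factorial pairing. Then ∑_{x ∈ γ} (F(γ ∖ {x}) - F(γ)) = -n · F(γ). -/
theorem sum_death_gradient {X : Type*} [DecidableEq X] (γ : Finset X) (n : ℕ)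
    (f : (Fin n → X) → ℝ) (hf : IsSymmFun f) :
    ∑ x ∈ γ, (ffPairing (γ.erase x) n f - ffPairing γ n f)
      = -(n : ℝ) * ffPairing γ n f := by
  classical
  set S := (Fintype.piFinset fun _ : Fin n => γ).filter (fun t => Function.Injective t) with hS
  have hstep : ∀ x ∈ γ, ffPairing (γ.erase x) n f
      = ∑ t ∈ S, if ∀ i, t i ≠ x then f t else 0 := by
    intro x hx
    rw [ffPairing, ← Finset.sum_filter]
    congr 1
    ext t
    simp only [hS, Finset.mem_filter, Fintype.mem_piFinset, Finset.mem_erase]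
    aesop
  have key : ∑ x ∈ γ, ffPairing (γ.erase x) n f = ((γ.card : ℝ) - n) * ffPairing γ n f := by
    rw [Finset.sum_congr rfl hstep, Finset.sum_comm, ffPairing, Finset.mul_sum]
    apply Finset.sum_congr rfl
    intro t ht
    rw [hS, Finset.mem_filter, Fintype.mem_piFinset] at ht
    obtain ⟨hran, hinj⟩ := ht
    have himg : (Finset.univ.image t) ⊆ γ := by
      intro y hy
      simp only [Finset.mem_image] at hy
      obtain ⟨i, _, rfl⟩ := hy
      exact hran i
    have hcardimg : (Finset.univ.image t).card = n := by
      rw [Finset.card_image_of_injective _ hinj, Finset.card_univ, Fintype.card_fin]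
    have hfilt : γ.filter (fun x => ∀ i, t i ≠ x) = γ \ (Finset.univ.image t) := by
      ext y
      simp [and_comm, eq_comm]
    rw [← Finset.sum_filter, Finset.sum_const, hfilt, Finset.card_sdiff_of_subset himg, hcardimg]
    have hn : n ≤ γ.card := hcardimg ▸ Finset.card_le_card himg
    rw [nsmul_eq_mul, Nat.cast_sub hn]
  rw [Finset.sum_sub_distrib, key, Finset.sum_const, nsmul_eq_mul]
  ring
end

section
/- Let γ be a finset of X, ψ : X → ℝ, f : X^n → ℝ symmetric. Then the weighted death-derivative formula holds: ∑_{x ∈ γ} ψ(x)·(⟨(γ∖{x})_n, f⟩ - ⟨(γ)_n, f⟩) = -∑ over ordered n-tuples (x₁,…,x_n) of pairwise distinct points of γ of (ψ(x₁)+⋯+ψ(x_n))·f(x₁,…,x_n). -/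
theorem weighted_death_derivative {X : Type*} [DecidableEq X] (γ : Finset X)
    (ψ : X → ℝ) (n : ℕ) (f : (Fin (n + 1) → X) → ℝ) (hf : IsSymmFun f) :
    ∑ x ∈ γ, ψ x * (ffPairing (γ.erase x) (n + 1) f - ffPairing γ (n + 1) f)
      = -ffPairing γ (n + 1) (fun t => (∑ i, ψ (t i)) * f t) := by
  classical
  set S := (Fintype.piFinset fun _ : Fin (n + 1) => γ).filter
      (fun t => Function.Injective t) with hS
  have hfil : ∀ x : X, ffPairing (γ.erase x) (n + 1) f
      = ∑ t ∈ S.filter (fun t => ∀ i, t i ≠ x), f t := by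
    intro x
    unfold ffPairing
    congr 1
    ext t
    simp only [hS, Finset.mem_filter, Fintype.mem_piFinset, Finset.mem_erase, forall_and]
    tauto
  have hsplit : ∀ x : X,
      ffPairing (γ.erase x) (n + 1) f - ffPairing γ (n + 1) f
      = -∑ t ∈ S.filter (fun t => ∃ i, t i = x), f t := by
    intro x
    rw [hfil x]
    have h1 : ffPairing γ (n + 1) f = ∑ t ∈ S, f t := rfl
    rw [h1, ← Finset.sum_filter_add_sum_filter_not S (fun t => ∃ i, t i = x) f]
    have h2 : S.filter (fun t => ¬ ∃ i, t i = x) = S.filter (fun t => ∀ i, t i ≠ x) := by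
      simp [not_exists]
    rw [h2]; ring
  have key : ∀ t ∈ S, ∑ x ∈ γ, (if ∃ i, t i = x then ψ x * f t else 0)
      = (∑ i, ψ (t i)) * f t := by
    intro t ht
    rw [hS, Finset.mem_filter, Fintype.mem_piFinset] at ht
    rw [← Finset.sum_filter]
    have himg : γ.filter (fun x => ∃ i, t i = x) = Finset.image t Finset.univ := by
      ext x
      simp only [Finset.mem_filter, Finset.mem_image, Finset.mem_univ, true_and]
      constructor
      · rintro ⟨_, i, rfl⟩; exact ⟨i, rfl⟩
      · rintro ⟨i, rfl⟩; exact ⟨ht.1 i, i, rfl⟩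
    rw [himg, Finset.sum_image (fun i _ j _ h => ht.2 h), ← Finset.sum_mul]
  calc ∑ x ∈ γ, ψ x * (ffPairing (γ.erase x) (n + 1) f - ffPairing γ (n + 1) f)
      = ∑ x ∈ γ, -∑ t ∈ S, (if ∃ i, t i = x then ψ x * f t else 0) := by
        refine Finset.sum_congr rfl fun x hx => ?_
        rw [hsplit x, mul_neg, Finset.mul_sum, Finset.sum_filter]
    _ = -∑ t ∈ S, ∑ x ∈ γ, (if ∃ i, t i = x then ψ x * f t else 0) := by
        simp only [Finset.sum_neg_distrib]
        rw [Finset.sum_comm]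
    _ = -∑ t ∈ S, (∑ i, ψ (t i)) * f t := by
        rw [neg_inj]; exact Finset.sum_congr rfl key
    _ = -ffPairing γ (n + 1) (fun t => (∑ i, ψ (t i)) * f t) := rfl
end

section
/- Recurrence formula for falling factorials on finite configurations: for a finset γ ⊂ X, ψ : X → ℝ, and symmetric f : X^n → ℝ, (∑_{x∈γ} ψ(x)) · ⟨(γ)_n, f⟩ = ⟨(γ)_{n+1}, Sym(ψ ⊗ f)⟩ + ⟨(γ)_n, (∑ᵢ ψ(xᵢ))·f⟩, where ⟨(γ)_m, g⟩ is summation of g over ordered m-tuples of pairwise distinct points of γ and Sym denotes symmetrization. -/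
/-- The symmetrization of `ψ ⊗ f`:
`Sym(ψ⊗f)(x₀,…,x_n) = (1/(n+1)) ∑_j ψ(x_j) f(x₀,…,x̂_j,…,x_n)`. -/
noncomputable def symTensor {X : Type*} {n : ℕ} (ψ : X → ℝ) (f : (Fin n → X) → ℝ) :
    (Fin (n + 1) → X) → ℝ :=
  fun t => (1 / (n + 1 : ℝ)) * ∑ j : Fin (n + 1), ψ (t j) * f (fun i => t (j.succAbove i))

open Finset

/-- reindexing the sum over injective tuples by precomposition with a permutation -/
lemma sum_precomp {X : Type*} [DecidableEq X] (γ : Finset X) (m : ℕ)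
    (τ : Equiv.Perm (Fin m)) (G : (Fin m → X) → ℝ) :
    ∑ s ∈ (Fintype.piFinset fun _ : Fin m => γ).filter (fun t => Function.Injective t),
        G (s ∘ τ)
      = ∑ s ∈ (Fintype.piFinset fun _ : Fin m => γ).filter (fun t => Function.Injective t),
        G s := by
  apply Finset.sum_nbij' (i := fun s => s ∘ τ) (j := fun s => s ∘ τ.symm)
  · intro s hs
    simp only [mem_filter, Fintype.mem_piFinset] at hs ⊢
    exact ⟨fun i => hs.1 _, hs.2.comp τ.injective⟩
  · intro s hs
    simp only [mem_filter, Fintype.mem_piFinset] at hs ⊢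
    exact ⟨fun i => hs.1 _, hs.2.comp τ.symm.injective⟩
  · intro s _; funext i; simp
  · intro s _; funext i; simp
  · intro s _; rfl

lemma term_eq {X : Type*} [DecidableEq X] (γ : Finset X) (ψ : X → ℝ) (n : ℕ)
    (f : (Fin n → X) → ℝ) (hf : IsSymmFun f) (j : Fin (n + 1)) :
    ∑ s ∈ (Fintype.piFinset fun _ : Fin (n+1) => γ).filter (fun t => Function.Injective t),
        ψ (s j) * f (fun i => s (j.succAbove i))
      = ∑ s ∈ (Fintype.piFinset fun _ : Fin (n+1) => γ).filter
          (fun t => Function.Injective t),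
        ψ (s (Fin.last n)) * f (fun i => s i.castSucc) := by
  set τ : Equiv.Perm (Fin (n+1)) := Equiv.swap j (Fin.last n) with hτ
  have hne : ∀ i : Fin n, τ (j.succAbove i) ≠ Fin.last n := by
    intro i h
    have : τ (j.succAbove i) = τ j := by rw [h, hτ, Equiv.swap_apply_left]
    exact Fin.succAbove_ne j i (τ.injective this)
  let e : Fin n → Fin n := fun i => (τ (j.succAbove i)).castPred (hne i)
  have he : Function.Injective e := by
    intro a b hab
    have : τ (j.succAbove a) = τ (j.succAbove b) := by
      have := congrArg Fin.castSucc hab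
      simpa [e] using this
    exact (Fin.succAbove_right_injective (p := j)) (τ.injective this)
  let σ : Equiv.Perm (Fin n) := Equiv.ofBijective e (Finite.injective_iff_bijective.mp he)
  calc
    ∑ s ∈ (Fintype.piFinset fun _ : Fin (n+1) => γ).filter (fun t => Function.Injective t),
        ψ (s j) * f (fun i => s (j.succAbove i))
      = ∑ s ∈ (Fintype.piFinset fun _ : Fin (n+1) => γ).filter
          (fun t => Function.Injective t),
        ψ ((s ∘ τ) j) * f (fun i => (s ∘ τ) (j.succAbove i)) := by
        exact (sum_precomp γ (n+1) τ
          (fun s => ψ (s j) * f (fun i => s (j.succAbove i)))).symm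
    _ = ∑ s ∈ (Fintype.piFinset fun _ : Fin (n+1) => γ).filter
          (fun t => Function.Injective t),
        ψ (s (Fin.last n)) * f (fun i => s i.castSucc) := by
        apply Finset.sum_congr rfl
        intro s _
        have h1 : (s ∘ τ) j = s (Fin.last n) := by
          simp [hτ, Equiv.swap_apply_left]
        rw [h1]
        congr 1
        have h2 : (fun i => (s ∘ τ) (j.succAbove i)) = (fun i => s i.castSucc) ∘ σ := by
          funext i
          show s (τ (j.succAbove i)) = s (Fin.castSucc ((τ (j.succAbove i)).castPred (hne i)))
          rw [Fin.castSucc_castPred]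
        rw [h2, hf σ]

lemma snoc_sum {X : Type*} [DecidableEq X] (γ : Finset X) (n : ℕ)
    (G : (Fin (n+1) → X) → ℝ) :
    ∑ s ∈ (Fintype.piFinset fun _ : Fin (n+1) => γ).filter (fun t => Function.Injective t),
        G s
      = ∑ p ∈ ((Fintype.piFinset fun _ : Fin n => γ).filter
            (fun t => Function.Injective t)).sigma
            (fun t => γ \ Finset.image t Finset.univ),
        G (Fin.snoc p.1 p.2) := by
  apply Finset.sum_nbij'
    (i := fun s => (⟨fun i => s i.castSucc, s (Fin.last n)⟩ :
      Σ _ : Fin n → X, X))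
    (j := fun p => Fin.snoc p.1 p.2)
  · intro s hs
    simp only [mem_filter, Fintype.mem_piFinset] at hs
    simp only [Finset.mem_sigma, mem_filter, Fintype.mem_piFinset, Finset.mem_sdiff,
      Finset.mem_image, Finset.mem_univ, true_and]
    refine ⟨⟨fun i => hs.1 _, fun a b hab => ?_⟩, hs.1 _, ?_⟩
    · exact Fin.castSucc_injective n (hs.2 hab)
    · rintro ⟨i, hi⟩
      have := hs.2 hi
      exact absurd this (Fin.castSucc_lt_last i).ne
  · rintro ⟨t, x⟩ hp
    simp only [Finset.mem_sigma, mem_filter, Fintype.mem_piFinset, Finset.mem_sdiff,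
      Finset.mem_image, Finset.mem_univ, true_and] at hp
    obtain ⟨⟨ht, hinj⟩, hxγ, hx⟩ := hp
    simp only [mem_filter, Fintype.mem_piFinset]
    constructor
    · intro i
      rcases Fin.eq_castSucc_or_eq_last i with ⟨k, rfl⟩ | rfl
      · simpa using ht k
      · simpa using hxγ
    · intro a b hab
      rcases Fin.eq_castSucc_or_eq_last a with ⟨a', rfl⟩ | rfl <;>
        rcases Fin.eq_castSucc_or_eq_last b with ⟨b', rfl⟩ | rfl
      · simp only [Fin.snoc_castSucc] at hab
        exact congrArg Fin.castSucc (hinj hab)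
      · simp only [Fin.snoc_castSucc, Fin.snoc_last] at hab
        exact absurd ⟨a', hab⟩ hx
      · simp only [Fin.snoc_castSucc, Fin.snoc_last] at hab
        exact absurd ⟨b', hab.symm⟩ hx
      · rfl
  · intro s _
    exact Fin.snoc_init_self s
  · rintro ⟨t, x⟩ _
    simp [Fin.snoc_castSucc, Fin.snoc_last, Fin.init]
  · intro s _
    exact congrArg G (Fin.snoc_init_self s).symm

theorem recurrence_falling_factorials {X : Type*} [DecidableEq X] (γ : Finset X)
    (ψ : X → ℝ) (n : ℕ) (f : (Fin n → X) → ℝ) (hf : IsSymmFun f) :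
    (∑ x ∈ γ, ψ x) * ffPairing γ n f
      = ffPairing γ (n + 1) (symTensor ψ f)
        + ffPairing γ n (fun t => (∑ i, ψ (t i)) * f t) := by
  classical
  set S : Finset (Fin n → X) :=
    (Fintype.piFinset fun _ : Fin n => γ).filter (fun t => Function.Injective t) with hS
  -- Step 1: symmetrized term
  have step1 : ffPairing γ (n + 1) (symTensor ψ f)
      = ∑ s ∈ (Fintype.piFinset fun _ : Fin (n+1) => γ).filter
          (fun t => Function.Injective t),
        ψ (s (Fin.last n)) * f (fun i => s i.castSucc) := by
    unfold ffPairing symTensor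
    rw [← Finset.mul_sum, Finset.sum_comm]
    have : ∀ j : Fin (n+1),
        ∑ s ∈ (Fintype.piFinset fun _ : Fin (n+1) => γ).filter
          (fun t => Function.Injective t),
          ψ (s j) * f (fun i => s (j.succAbove i))
        = ∑ s ∈ (Fintype.piFinset fun _ : Fin (n+1) => γ).filter
          (fun t => Function.Injective t),
          ψ (s (Fin.last n)) * f (fun i => s i.castSucc) := fun j => term_eq γ ψ n f hf j
    rw [Finset.sum_congr rfl fun j _ => this j, Finset.sum_const, Finset.card_univ,
      Fintype.card_fin, nsmul_eq_mul]
    have hpos : ((n : ℝ) + 1) ≠ 0 := by positivity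
    push_cast
    field_simp
  -- Step 2: snoc decomposition
  have step2 : ∑ s ∈ (Fintype.piFinset fun _ : Fin (n+1) => γ).filter
        (fun t => Function.Injective t),
      ψ (s (Fin.last n)) * f (fun i => s i.castSucc)
      = ∑ t ∈ S, ((∑ x ∈ γ, ψ x) - ∑ i, ψ (t i)) * f t := by
    rw [snoc_sum γ n (fun s => ψ (s (Fin.last n)) * f (fun i => s i.castSucc)),
      Finset.sum_sigma]
    apply Finset.sum_congr rfl
    intro t ht
    simp only [mem_filter, Fintype.mem_piFinset, hS] at ht
    have key : ∀ x ∈ γ \ Finset.image t Finset.univ,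
        ψ ((Fin.snoc t x : Fin (n+1) → X) (Fin.last n)) *
          f (fun i => (Fin.snoc t x : Fin (n+1) → X) i.castSucc)
        = ψ x * f t := by
      intro x _
      congr 1
      · rw [Fin.snoc_last]
      · congr 1
        funext i
        rw [Fin.snoc_castSucc]
    rw [Finset.sum_congr rfl key, ← Finset.sum_mul]
    congr 1
    rw [Finset.sum_sdiff_eq_sub (Finset.image_subset_iff.mpr fun i _ => ht.1 i)]
    congr 1
    rw [Finset.sum_image (fun a _ b _ h => ht.2 h)]
  rw [step1, step2]
  unfold ffPairing
  rw [← hS, Finset.mul_sum, ← Finset.sum_add_distrib]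
  apply Finset.sum_congr rfl
  intro t _
  ring
end

section
/- Let γ be a finset of X, let a : X × X → ℝ be symmetric, and F(γ) := ⟨(γ)_n, f⟩ for symmetric f : Xⁿ → ℝ. For the jump generator with rate c̃(x,y) = a(x,y): for any x ∈ γ and y ∉ γ∖{x}, F((γ∖{x}) ∪ {y}) - F(γ) = n·⟨(γ∖{x})_{n-1}, f(y,·) - f(x,·)⟩. -/
lemma insertNth_eq_cons_comp {X : Type*} {n : ℕ} (i : Fin (n + 1)) (z : X) (s : Fin n → X) :
    Fin.insertNth i z s = (Fin.cons z s) ∘ i.cycleRange := by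
  ext k
  rcases eq_or_ne k i with rfl | hk
  · simp [Fin.cycleRange_self]
  · obtain ⟨j, rfl⟩ := Fin.exists_succAbove_eq hk
    simp [Fin.cycleRange_succAbove]

lemma ffPairing_insert {X : Type*} [DecidableEq X] (δ : Finset X) (z : X) (hz : z ∉ δ)
    (n : ℕ) (f : (Fin (n + 1) → X) → ℝ) (hf : IsSymmFun f) :
    ffPairing (insert z δ) (n + 1) f
      = ffPairing δ (n + 1) f + (n + 1 : ℝ) * ffPairing δ n (fun t => f (Fin.cons z t)) := by
  classical
  unfold ffPairing
  rw [← Finset.sum_filter_add_sum_filter_not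
    ((Fintype.piFinset fun _ : Fin (n+1) => insert z δ).filter (fun t => Function.Injective t))
    (fun t => ∀ j, t j ≠ z)]
  congr 1
  · apply Finset.sum_congr
    · ext t
      simp only [Finset.mem_filter, Fintype.mem_piFinset, Finset.mem_insert]
      constructor
      · rintro ⟨⟨h1, h2⟩, h3⟩
        exact ⟨fun j => (h1 j).resolve_left (h3 j), h2⟩
      · rintro ⟨h1, h2⟩
        exact ⟨⟨fun j => Or.inr (h1 j), h2⟩, fun j hj => hz (hj ▸ h1 j)⟩
    · intros; rfl
  · -- sum over tuples containing z
    have key : ∑ t ∈ ((Fintype.piFinset fun _ : Fin (n+1) => insert z δ).filter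
        (fun t => Function.Injective t)).filter (fun t => ¬∀ j, t j ≠ z), f t
        = ∑ p ∈ Finset.univ ×ˢ ((Fintype.piFinset fun _ : Fin n => δ).filter
            (fun t => Function.Injective t)),
            f (Fin.insertNth p.1 z p.2) := by
      refine (Finset.sum_bij (fun p _ => Fin.insertNth p.1 z p.2) ?_ ?_ ?_ ?_).symm
      · rintro ⟨i, s⟩ hp
        simp only [Finset.mem_product, Finset.mem_filter, Fintype.mem_piFinset] at hp ⊢
        obtain ⟨-, hs, hsi⟩ := hp
        refine ⟨⟨fun j => ?_, ?_⟩, ?_⟩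
        · rcases eq_or_ne j i with rfl | hj
          · simp
          · obtain ⟨k, rfl⟩ := Fin.exists_succAbove_eq hj
            simp [Finset.mem_insert, hs k]
        · intro a b hab
          rcases eq_or_ne a i with ha | ha
          · rcases eq_or_ne b i with hb | hb
            · rw [ha, hb]
            · obtain ⟨k, rfl⟩ := Fin.exists_succAbove_eq hb
              rw [ha] at hab
              simp only [Fin.insertNth_apply_same, Fin.insertNth_apply_succAbove] at hab
              exact absurd (hab ▸ hs k) hz
          · rcases eq_or_ne b i with hb | hb
            · obtain ⟨k, rfl⟩ := Fin.exists_succAbove_eq ha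
              rw [hb] at hab
              simp only [Fin.insertNth_apply_same, Fin.insertNth_apply_succAbove] at hab
              exact absurd (hab.symm ▸ hs k) hz
            · obtain ⟨k, rfl⟩ := Fin.exists_succAbove_eq ha
              obtain ⟨l, rfl⟩ := Fin.exists_succAbove_eq hb
              simp only [Fin.insertNth_apply_succAbove] at hab
              exact congrArg i.succAbove (hsi hab)
        · push_neg
          exact ⟨i, by simp⟩
      · rintro ⟨i, s⟩ hp ⟨i', s'⟩ hp' h
        simp only [Finset.mem_product, Finset.mem_filter, Fintype.mem_piFinset] at hp hp'
        have h' : ∀ j, Fin.insertNth (α := fun _ : Fin (n+1) => X) i z s j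
            = Fin.insertNth (α := fun _ : Fin (n+1) => X) i' z s' j := fun j => congrFun h j
        have hi : i = i' := by
          by_contra hii
          obtain ⟨k, hk⟩ := Fin.exists_succAbove_eq hii
          have := h' i
          rw [Fin.insertNth_apply_same, ← hk, Fin.insertNth_apply_succAbove] at this
          exact hz (this ▸ hp'.2.1 k)
        subst hi
        have hs : s = s' := by
          ext k
          have := h' (i.succAbove k)
          simpa using this
        simp [hs]
      · intro t ht
        simp only [Finset.mem_filter, Fintype.mem_piFinset, Finset.mem_insert] at ht
        obtain ⟨⟨h1, h2⟩, h3⟩ := ht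
        push_neg at h3
        obtain ⟨i, hi⟩ := h3
        refine ⟨⟨i, fun j => t (i.succAbove j)⟩, ?_, ?_⟩
        · simp only [Finset.mem_product, Finset.mem_filter, Fintype.mem_piFinset,
            Finset.mem_univ, true_and]
          refine ⟨fun j => ?_, fun a b hab => ?_⟩
          · have := h1 (i.succAbove j)
            rcases this with h | h
            · exact absurd (h2 (h.trans hi.symm)) (i.succAbove_ne j)
            · exact h
          · exact Fin.succAbove_right_injective (h2 hab)
        · show Fin.insertNth i z (fun j => t (i.succAbove j)) = t
          rw [← hi]
          exact Fin.insertNth_self_removeNth i t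
      · intros; rfl
    rw [key, Finset.sum_product]
    have : ∀ i : Fin (n+1), ∀ s ∈ (Fintype.piFinset fun _ : Fin n => δ).filter
        (fun t => Function.Injective t), f (Fin.insertNth i z s) = f (Fin.cons z s) := by
      intro i s _
      rw [insertNth_eq_cons_comp]
      exact hf i.cycleRange (Fin.cons z s)
    calc ∑ i : Fin (n+1), ∑ s ∈ (Fintype.piFinset fun _ : Fin n => δ).filter
          (fun t => Function.Injective t), f (Fin.insertNth i z s)
        = ∑ _i : Fin (n+1), ∑ s ∈ (Fintype.piFinset fun _ : Fin n => δ).filter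
            (fun t => Function.Injective t), f (Fin.cons z s) := by
          exact Finset.sum_congr rfl fun i _ => Finset.sum_congr rfl (this i)
      _ = (n + 1 : ℝ) * ∑ s ∈ (Fintype.piFinset fun _ : Fin n => δ).filter
            (fun t => Function.Injective t), f (Fin.cons z s) := by
          simp [Finset.sum_const, nsmul_eq_mul]

theorem jump_difference {X : Type*} [DecidableEq X] (γ : Finset X) (x y : X)
    (hx : x ∈ γ) (hy : y ∉ γ.erase x) (n : ℕ)
    (f : (Fin (n + 1) → X) → ℝ) (hf : IsSymmFun f) :
    ffPairing (insert y (γ.erase x)) (n + 1) f - ffPairing γ (n + 1) f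
      = (n + 1 : ℝ)
          * ffPairing (γ.erase x) n (fun t => f (Fin.cons y t) - f (Fin.cons x t)) := by
  have hγ : γ = insert x (γ.erase x) := (Finset.insert_erase hx).symm
  rw [ffPairing_insert _ y hy n f hf]
  nth_rewrite 3 [hγ]
  rw [ffPairing_insert _ x (Finset.notMem_erase x γ) n f hf]
  have : ffPairing (γ.erase x) n (fun t => f (Fin.cons y t) - f (Fin.cons x t))
      = ffPairing (γ.erase x) n (fun t => f (Fin.cons y t))
        - ffPairing (γ.erase x) n (fun t => f (Fin.cons x t)) := by
    unfold ffPairing; rw [Finset.sum_sub_distrib]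
  rw [this]; ring
end

section
/- Product formula (special case m=1): for a finset γ of X, ψ : X → ℝ, and symmetric f : Xⁿ → ℝ, ⟨(γ)_n, f⟩ · ⟨(γ)_1, ψ⟩ = ⟨(γ)_{n+1}, (n+1)·Sym(ψ⊗f)⟩·(1/1) + ⟨(γ)_n, B₁(ψ)f⟩, where (B₁(ψ)f)(x₁,…,x_n) = (∑ᵢψ(xᵢ))f(x₁,…,x_n) and ⟨(γ)_1, ψ⟩ = ∑_{x∈γ}ψ(x). Equivalently: (∑_{x∈γ}ψ(x))·⟨(γ)_n, f⟩ = ∑_{distinct (x₀,…,x_n) in γ} ψ(x₀)f(x₁,…,x_n) + ∑_{distinct (x₁,…,x_n) in γ}(∑ᵢψ(xᵢ))f(x₁,…,x_n). -/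
theorem product_formula_m_one {X : Type*} [DecidableEq X] (γ : Finset X)
    (ψ : X → ℝ) (n : ℕ) (f : (Fin n → X) → ℝ) (hf : IsSymmFun f) :
    (∑ x ∈ γ, ψ x) * ffPairing γ n f
      = ffPairing γ (n + 1) (fun t => ψ (t 0) * f (fun i => t i.succ))
        + ffPairing γ n (fun t => (∑ i, ψ (t i)) * f t) := by
  classical
  unfold ffPairing
  rw [Finset.mul_sum]
  have key : ∀ t ∈ (Fintype.piFinset fun _ : Fin n => γ).filter (fun t => Function.Injective t),
      (∑ x ∈ γ, ψ x) * f t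
        = (∑ x ∈ γ \ Finset.image t Finset.univ, ψ x * f t) + (∑ i, ψ (t i)) * f t := by
    intro t ht
    simp only [Finset.mem_filter, Fintype.mem_piFinset] at ht
    have himg : Finset.image t Finset.univ ⊆ γ := by
      intro x hx
      simp only [Finset.mem_image, Finset.mem_univ, true_and] at hx
      obtain ⟨i, rfl⟩ := hx; exact ht.1 i
    rw [← Finset.sum_sdiff himg,
      Finset.sum_image (fun a _ b _ h => ht.2 h), add_mul, ← Finset.sum_mul]
  rw [Finset.sum_congr rfl key, Finset.sum_add_distrib]
  congr 1
  rw [Finset.sum_sigma']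
  refine Finset.sum_nbij' (fun p => Fin.cons p.2 p.1) (fun s => ⟨fun i => s i.succ, s 0⟩)
    ?_ ?_ ?_ ?_ ?_
  · rintro ⟨t, x⟩ hp
    simp only [Finset.mem_sigma, Finset.mem_filter, Fintype.mem_piFinset, Finset.mem_sdiff,
      Finset.mem_image, Finset.mem_univ, true_and] at hp
    obtain ⟨⟨ht, hinj⟩, hx, hxt⟩ := hp
    simp only [Finset.mem_filter, Fintype.mem_piFinset]
    constructor
    · intro i
      refine Fin.cases ?_ ?_ i
      · exact hx
      · intro j; exact ht j
    · rw [Fin.cons_injective_iff]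
      exact ⟨fun ⟨i, hi⟩ => hxt ⟨i, hi⟩, hinj⟩
  · intro s hs
    simp only [Finset.mem_filter, Fintype.mem_piFinset] at hs
    obtain ⟨hs1, hs2⟩ := hs
    simp only [Finset.mem_sigma, Finset.mem_filter, Fintype.mem_piFinset, Finset.mem_sdiff,
      Finset.mem_image, Finset.mem_univ, true_and]
    refine ⟨⟨fun i => hs1 _, fun a b h => Fin.succ_injective _ (hs2 h)⟩, hs1 0, ?_⟩
    rintro ⟨i, hi⟩
    exact (Fin.succ_ne_zero i) (hs2 hi)
  · rintro ⟨t, x⟩ _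
    simp [Fin.cons_succ, Fin.cons_zero]
  · intro s _
    funext i
    refine Fin.cases rfl (fun j => rfl) i
  · rintro ⟨t, x⟩ _
    simp [Fin.cons_zero, Fin.cons_succ]
end
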